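/- The complement of an induced matching of size t has thinness exactly t, i.e., thin(complement of tK₂) = t for every t ≥ 1. -/

import Mathlib

open SimpleGraph

/-- An ordering (given by an injective rank function `f`) and a partition (given by a
coloring `c`) are consistent: for `r < s < t`, if `r, s` are in the same class and
`t` is adjacent to `r`, then `t` is adjacent to `s`. -/
def Consistent {V : Type*} (G : SimpleGraph V) (f : V → ℕ) (c : V → ℕ) : Prop :=
  ∀ r s t : V, f r < f s → f s < f t → c r = c s → G.Adj t r → G.Adj t s

/-- Strong consistency: consistency with the ordering and with its reverse. -/
def StronglyConsistent {V : Type*} (G : SimpleGraph V) (f : V → ℕ) (c : V → ℕ) : Prop :=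
  Consistent G f c ∧
    ∀ r s t : V, f r < f s → f s < f t → c s = c t → G.Adj t r → G.Adj s r

/-- The thinness of a graph. -/
noncomputable def thin {V : Type*} (G : SimpleGraph V) : ℕ :=
  sInf {k | ∃ f c : V → ℕ, Function.Injective f ∧ (∀ v, c v < k) ∧ Consistent G f c}

/-- The proper thinness of a graph. -/
noncomputable def pthin {V : Type*} (G : SimpleGraph V) : ℕ :=
  sInf {k | ∃ f c : V → ℕ, Function.Injective f ∧ (∀ v, c v < k) ∧ StronglyConsistent G f c}

/-- Independent thinness: classes must be independent sets. -/
noncomputable def indthin {V : Type*} (G : SimpleGraph V) : ℕ :=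
  sInf {k | ∃ f c : V → ℕ, Function.Injective f ∧ (∀ v, c v < k) ∧ Consistent G f c ∧
    ∀ u v : V, c u = c v → ¬ G.Adj u v}

/-- Independent proper thinness. -/
noncomputable def indpthin {V : Type*} (G : SimpleGraph V) : ℕ :=
  sInf {k | ∃ f c : V → ℕ, Function.Injective f ∧ (∀ v, c v < k) ∧ StronglyConsistent G f c ∧
    ∀ u v : V, c u = c v → ¬ G.Adj u v}

/-- Complete thinness: classes must be cliques. -/
noncomputable def compthin {V : Type*} (G : SimpleGraph V) : ℕ :=
  sInf {k | ∃ f c : V → ℕ, Function.Injective f ∧ (∀ v, c v < k) ∧ Consistent G f c ∧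
    ∀ u v : V, u ≠ v → c u = c v → G.Adj u v}

/-- Complete proper thinness. -/
noncomputable def comppthin {V : Type*} (G : SimpleGraph V) : ℕ :=
  sInf {k | ∃ f c : V → ℕ, Function.Injective f ∧ (∀ v, c v < k) ∧ StronglyConsistent G f c ∧
    ∀ u v : V, u ≠ v → c u = c v → G.Adj u v}

/-- The incompatibility graph `G_<` of a graph and an ordering: for `v < w`,
`vw` is an edge iff there is `z > w` adjacent to `v` but not to `w`. -/
def incompat {V : Type*} (G : SimpleGraph V) (f : V → ℕ) : SimpleGraph V where
  Adj v w :=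
    (f v < f w ∧ ∃ z, f w < f z ∧ G.Adj z v ∧ ¬ G.Adj z w) ∨
    (f w < f v ∧ ∃ z, f v < f z ∧ G.Adj z w ∧ ¬ G.Adj z v)
  symm := ⟨fun v w h => h.symm⟩
  loopless := ⟨fun v h => by rcases h with ⟨h, _⟩ | ⟨h, _⟩ <;> exact lt_irrefl _ h⟩

/-- The join of two graphs. -/
def joinG {V₁ V₂ : Type*} (G₁ : SimpleGraph V₁) (G₂ : SimpleGraph V₂) :
    SimpleGraph (V₁ ⊕ V₂) where
  Adj x y := match x, y with
    | Sum.inl u, Sum.inl v => G₁.Adj u v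
    | Sum.inr u, Sum.inr v => G₂.Adj u v
    | Sum.inl _, Sum.inr _ => True
    | Sum.inr _, Sum.inl _ => True
  symm := by refine ⟨?_⟩; rintro (u | u) (v | v) h
             · exact G₁.symm.symm _ _ h
             · trivial
             · trivial
             · exact G₂.symm.symm _ _ h
  loopless := by refine ⟨?_⟩; rintro (u | u) h
                 · exact G₁.loopless.irrefl u h
                 · exact G₂.loopless.irrefl u h

/-- A graph is complete iff all pairs of distinct vertices are adjacent. -/
def IsCompleteGraph {V : Type*} (G : SimpleGraph V) : Prop :=
  ∀ u v : V, u ≠ v → G.Adj u v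

/-- The clique number of a graph. -/
noncomputable def omegaNum {V : Type*} (G : SimpleGraph V) : ℕ :=
  sSup {n | ∃ s : Finset V, s.card = n ∧ ∀ u ∈ s, ∀ v ∈ s, u ≠ v → G.Adj u v}

/-- The independence number of a graph. -/
noncomputable def alphaNum {V : Type*} (G : SimpleGraph V) : ℕ :=
  sSup {n | ∃ s : Finset V, s.card = n ∧ ∀ u ∈ s, ∀ v ∈ s, u ≠ v → ¬ G.Adj u v}


/-- The complement of a matching of size `t`: vertices `(i, a)` with `i : Fin t`,
`a : Fin 2`, adjacent iff they come from different matched pairs. -/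
def complMatching (t : ℕ) : SimpleGraph (Fin t × Fin 2) where
  Adj u v := u.1 ≠ v.1
  symm := ⟨fun _ _ h => h.symm⟩
  loopless := ⟨fun _ h => h rfl⟩

/-!
Partitioning by matched pairs is consistent with every ordering: a vertex adjacent to one
vertex of a pair is adjacent to the other. Conversely, in any consistent ordering let `bᵢ` be
the earlier vertex of pair `i` and `aᵢ` the later one. For `bᵢ < bⱼ`, the vertex `aⱼ` comes
after `bⱼ`, is adjacent to `bᵢ` and not to `bⱼ`, so `bᵢ` and `bⱼ` lie in different classes:
the `bᵢ` form a clique of the incompatibility graph and need `t` classes.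
-/

open Function

section Thinness

variable {V : Type*} {G : SimpleGraph V} {f c : V → ℕ} {k : ℕ}

theorem Consistent.thin_le (h : Consistent G f c) (hf : Injective f) (hc : ∀ v, c v < k) :
    thin G ≤ k :=
  Nat.sInf_le ⟨f, c, hf, hc, h⟩

theorem Consistent.exists_consistent_lt_thin (h : Consistent G f c) (hf : Injective f)
    (hc : ∀ v, c v < k) :
    ∃ f' c' : V → ℕ, Injective f' ∧ (∀ v, c' v < thin G) ∧ Consistent G f' c' :=
  Nat.sInf_mem (s := {k | ∃ f c : V → ℕ, Injective f ∧ (∀ v, c v < k) ∧ Consistent G f c})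
    ⟨k, f, c, hf, hc, h⟩

theorem Consistent.ne_of_incompat_adj (h : Consistent G f c) {v w : V}
    (hvw : (incompat G f).Adj v w) : c v ≠ c w := by
  rcases hvw with ⟨hlt, z, hz, hzv, hzw⟩ | ⟨hlt, z, hz, hzw, hzv⟩
  · exact fun heq => hzw (h v w z hlt hz heq hzv)
  · exact fun heq => hzv (h w v z hlt hz heq.symm hzw)

theorem Consistent.card_le_of_isClique_incompat (h : Consistent G f c) (hc : ∀ v, c v < k)
    {s : Finset V} (hs : (incompat G f).IsClique (s : Set V)) : s.card ≤ k := by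
  have hinj : Set.InjOn c s := fun v hv w hw heq =>
    by_contra fun hne => h.ne_of_incompat_adj (hs hv hw hne) heq
  simpa using Finset.card_le_card_of_injOn c (fun v _ => Finset.mem_range.2 (hc v)) hinj

end Thinness

namespace complMatching

variable {t : ℕ}

theorem consistent_fst (f : Fin t × Fin 2 → ℕ) :
    Consistent (complMatching t) f (fun v => v.1.val) :=
  fun _ _ _ _ _ hrs htr => by simpa [complMatching, Fin.ext hrs] using htr

variable (f : Fin t × Fin 2 → ℕ)

def earlier (i : Fin t) : Fin t × Fin 2 := if f (i, 0) < f (i, 1) then (i, 0) else (i, 1)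

def later (i : Fin t) : Fin t × Fin 2 := if f (i, 0) < f (i, 1) then (i, 1) else (i, 0)

@[simp] theorem earlier_fst (i : Fin t) : (earlier f i).1 = i := by
  unfold earlier; split <;> rfl

@[simp] theorem later_fst (i : Fin t) : (later f i).1 = i := by
  unfold later; split <;> rfl

variable {f}

theorem earlier_lt_later (hf : Injective f) (i : Fin t) : f (earlier f i) < f (later f i) := by
  unfold earlier later
  split
  · assumption
  · exact lt_of_le_of_ne (not_lt.1 ‹_›) fun h => absurd (hf h) (by simp)

theorem incompat_adj_earlier (hf : Injective f) {i j : Fin t} (hij : i ≠ j)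
    (hlt : f (earlier f i) < f (earlier f j)) :
    (incompat (complMatching t) f).Adj (earlier f i) (earlier f j) :=
  Or.inl ⟨hlt, later f j, earlier_lt_later hf j, by simpa [complMatching] using hij.symm,
    by simp [complMatching]⟩

theorem isClique_incompat_range_earlier (hf : Injective f) :
    (incompat (complMatching t) f).IsClique (Set.range (earlier f)) := by
  rintro _ ⟨i, rfl⟩ _ ⟨j, rfl⟩ hne
  have hij : i ≠ j := fun h => hne (h ▸ rfl)
  rcases lt_or_gt_of_ne (hf.ne hne) with hlt | hlt
  · exact incompat_adj_earlier hf hij hlt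
  · exact (incompat_adj_earlier hf hij.symm hlt).symm

theorem le_of_consistent {c : Fin t × Fin 2 → ℕ} {k : ℕ} (hf : Injective f)
    (hc : ∀ v, c v < k) (h : Consistent (complMatching t) f c) : t ≤ k := by
  have hclique : (incompat (complMatching t) f).IsClique
      ((Finset.univ.image (earlier f) : Finset _) : Set (Fin t × Fin 2)) := by
    simpa [Set.image_univ] using isClique_incompat_range_earlier hf
  have hcard := h.card_le_of_isClique_incompat hc hclique
  rwa [Finset.card_image_of_injective _ fun i j hij => by simpa using congrArg Prod.fst hij,
    Finset.card_univ, Fintype.card_fin] at hcard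

end complMatching

theorem thin_complMatching_general (t : ℕ) : thin (complMatching t) = t := by
  let f : Fin t × Fin 2 → ℕ := fun v => finProdFinEquiv v
  have hf : Injective f := Fin.val_injective.comp finProdFinEquiv.injective
  have hcons := complMatching.consistent_fst f
  have hc : ∀ v : Fin t × Fin 2, v.1.val < t := fun v => v.1.isLt
  refine le_antisymm (hcons.thin_le hf hc) ?_
  obtain ⟨f', c', hf', hc', hcons'⟩ := hcons.exists_consistent_lt_thin hf hc
  exact complMatching.le_of_consistent hf' hc' hcons'

/-- The thinness of the complement of an induced matching of size `t` is exactly `t`. -/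
theorem thin_complMatching (t : ℕ) (ht : 1 ≤ t) : thin (complMatching t) = t :=
  thin_complMatching_general t
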